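/- Let R be an abelian (von Neumann) regular ring. Then the matrix ring M_2(R) of 2 × 2 matrices over R is twin-good. -/

import Mathlib

/-!
In an abelian regular ring, an element `r = r x r` is a unit on one side of the central idempotent
`e = r x` and zero on the other: `e r = r` and `r + (1 - e)` is a unit.
For a central idempotent `e`, a matrix is twin-good as soon as it agrees with twin-good
matrices on the corners `e • M₂(R)` and `(1 - e) • M₂(R)`, since units and sums glue across the
Pierce decomposition. Twin-goodness is also invariant under multiplying by units on both sides.
Splitting along the idempotent of the top-left entry, a matrix with unit corner reduces by one
row and one column operation to `diag(1, δ)`, and a matrix with zero corner brings another entry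
to the corner by swapping rows or columns. Iterating, everything reduces to the matrices `1`,
`diag(1, 0)` and `0`, which are twin-good with explicit integer witnesses.
-/

open Matrix

def IsTwinGood {S : Type*} [Ring S] (x : S) : Prop :=
  ∃ u : S, IsUnit u ∧ IsUnit (x + u) ∧ IsUnit (x - u)

structure IsAbelianRegular (R : Type*) [Ring R] : Prop where
  regular : ∀ a : R, ∃ x : R, a = a * x * a
  abelian : ∀ e : R, e * e = e → ∀ y : R, e * y = y * e

section Ring

variable {S : Type*} [Ring S] {e x p q : S}

theorem IsIdempotentElem.mul_add_one_sub_mul_mul (he : IsIdempotentElem e)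
    (hc : ∀ y, Commute e y) (a b c d : S) :
    (e * a + (1 - e) * b) * (e * c + (1 - e) * d) = e * (a * c) + (1 - e) * (b * d) := by
  have hmove : ∀ f g y z : S, Commute g y → f * y * (g * z) = f * g * (y * z) := by
    intro f g y z h
    rw [mul_assoc, ← mul_assoc y, ← h.eq]
    simp only [mul_assoc]
  have hc' : ∀ y, Commute (1 - e) y := fun y => (Commute.one_left y).sub_left (hc y)
  simp only [add_mul, mul_add, hmove _ _ _ _ (hc _), hmove _ _ _ _ (hc' _), he.eq,
    he.one_sub.eq, he.mul_one_sub_self, he.one_sub_mul_self, zero_mul, add_zero, zero_add]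

theorem IsIdempotentElem.isUnit_mul_add_one_sub_mul (he : IsIdempotentElem e)
    (hc : ∀ y, Commute e y) {a b : S} (ha : IsUnit a) (hb : IsUnit b) :
    IsUnit (e * a + (1 - e) * b) := by
  obtain ⟨a, rfl⟩ := ha
  obtain ⟨b, rfl⟩ := hb
  refine isUnit_iff_exists.2 ⟨e * ↑a⁻¹ + (1 - e) * ↑b⁻¹, ?_, ?_⟩ <;>
    simp [he.mul_add_one_sub_mul_mul hc]

theorem IsTwinGood.zero : IsTwinGood (0 : S) :=
  ⟨1, isUnit_one, by simp, by simp⟩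

theorem IsTwinGood.mul_mul (hp : IsUnit p) (hq : IsUnit q) (h : IsTwinGood x) :
    IsTwinGood (p * x * q) := by
  obtain ⟨u, hu, hxu, hxu'⟩ := h
  refine ⟨p * u * q, (hp.mul hu).mul hq, ?_, ?_⟩
  · rw [← add_mul, ← mul_add]; exact (hp.mul hxu).mul hq
  · rw [← sub_mul, ← mul_sub]; exact (hp.mul hxu').mul hq

theorem IsTwinGood.of_mul_mul (hp : IsUnit p) (hq : IsUnit q) (h : IsTwinGood (p * x * q)) :
    IsTwinGood x := by
  obtain ⟨p, rfl⟩ := hp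
  obtain ⟨q, rfl⟩ := hq
  simpa [mul_assoc] using h.mul_mul p⁻¹.isUnit q⁻¹.isUnit

theorem IsTwinGood.of_isIdempotentElem {x₁ x₂ : S} (he : IsIdempotentElem e)
    (hc : ∀ y, Commute e y) (h₁ : e * x₁ = e * x) (h₂ : (1 - e) * x₂ = (1 - e) * x)
    (t₁ : IsTwinGood x₁) (t₂ : IsTwinGood x₂) : IsTwinGood x := by
  obtain ⟨u₁, hu₁, hxu₁, hxu₁'⟩ := t₁
  obtain ⟨u₂, hu₂, hxu₂, hxu₂'⟩ := t₂
  have hx : x = e * x₁ + (1 - e) * x₂ := by rw [h₁, h₂]; noncomm_ring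
  refine ⟨e * u₁ + (1 - e) * u₂, he.isUnit_mul_add_one_sub_mul hc hu₁ hu₂, ?_, ?_⟩
  · convert he.isUnit_mul_add_one_sub_mul hc hxu₁ hxu₂ using 1
    rw [hx]; noncomm_ring
  · convert he.isUnit_mul_add_one_sub_mul hc hxu₁' hxu₂' using 1
    rw [hx]; noncomm_ring

end Ring

theorem exists_isIdempotentElem_mul_eq_self_isUnit_add_one_sub {R : Type*} [Ring R]
    (hab : ∀ e : R, e * e = e → ∀ y : R, e * y = y * e) {r x : R} (hx : r = r * x * r) :
    ∃ e : R, IsIdempotentElem e ∧ (∀ y, Commute e y) ∧ e * r = r ∧ IsUnit (r + (1 - e)) := by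
  have he : IsIdempotentElem (r * x) := by
    rw [IsIdempotentElem, ← mul_assoc, ← hx]
  have hf : IsIdempotentElem (x * r) := by
    rw [IsIdempotentElem, mul_assoc, ← mul_assoc r, ← hx]
  have hec := hab _ he
  have hfc := hab _ hf
  -- `r x` and `x r` are central idempotents whose product equals each of them.
  have hxr : r * x * (x * r) = x * r := by rw [← mul_assoc, hec x, mul_assoc, ← hx]
  have hrx : r * x * (x * r) = r * x := by
    rw [mul_assoc, ← hfc x, ← mul_assoc, ← mul_assoc, ← hx]
  have hr : r + (1 - r * x) = r * x * r + (1 - r * x) * 1 := by rw [← hx, mul_one]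
  refine ⟨r * x, he, fun y => hec y, hx.symm,
    isUnit_iff_exists.2 ⟨r * x * x + (1 - r * x) * 1, ?_, ?_⟩⟩
  · rw [hr, he.mul_add_one_sub_mul_mul (fun y => hec y)]
    simp [he.eq]
  · rw [hr, he.mul_add_one_sub_mul_mul (fun y => hec y), hxr.symm.trans hrx]
    simp [he.eq]

section Matrix

variable {R : Type*} [Ring R]

theorem Matrix.isUnit_fin_two_of_lower {a d : R} (ha : IsUnit a) (hd : IsUnit d) (c : R) :
    IsUnit !![a, 0; c, d] := by
  obtain ⟨a, rfl⟩ := ha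
  obtain ⟨d, rfl⟩ := hd
  refine isUnit_iff_exists.2 ⟨!![↑a⁻¹, 0; -(↑d⁻¹ * c * ↑a⁻¹), ↑d⁻¹], ?_, ?_⟩ <;>
    simp [one_fin_two, ← mul_assoc]

theorem Matrix.isUnit_fin_two_of_upper {a d : R} (ha : IsUnit a) (hd : IsUnit d) (b : R) :
    IsUnit !![a, b; 0, d] := by
  obtain ⟨a, rfl⟩ := ha
  obtain ⟨d, rfl⟩ := hd
  refine isUnit_iff_exists.2 ⟨!![↑a⁻¹, -(↑a⁻¹ * b * ↑d⁻¹); 0, ↑d⁻¹], ?_, ?_⟩ <;>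
    simp [one_fin_two, ← mul_assoc]

theorem Matrix.isUnit_fin_two_swap : IsUnit !![(0 : R), 1; 1, 0] :=
  isUnit_iff_exists.2 ⟨!![0, 1; 1, 0], by rw [one_fin_two]; norm_num, by rw [one_fin_two]; norm_num⟩

theorem isTwinGood_one_fin_two : IsTwinGood (1 : Matrix (Fin 2) (Fin 2) R) := by
  refine ⟨!![0, 1; 1, 1], ?_, ?_, ?_⟩
  · refine isUnit_iff_exists.2 ⟨!![-1, 1; 1, 0], ?_, ?_⟩ <;>
      ext i j <;> fin_cases i <;> fin_cases j <;> norm_num [mul_apply, Fin.sum_univ_two]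
  · refine isUnit_iff_exists.2 ⟨!![2, -1; -1, 1], ?_, ?_⟩ <;>
      ext i j <;> fin_cases i <;> fin_cases j <;> norm_num [mul_apply, Fin.sum_univ_two]
  · refine isUnit_iff_exists.2 ⟨!![0, -1; -1, -1], ?_, ?_⟩ <;>
      ext i j <;> fin_cases i <;> fin_cases j <;> norm_num [mul_apply, Fin.sum_univ_two]

theorem isTwinGood_fin_two_one_zero : IsTwinGood !![(1 : R), 0; 0, 0] := by
  refine ⟨!![0, 1; 1, 0], isUnit_fin_two_swap, ?_, ?_⟩
  · refine isUnit_iff_exists.2 ⟨!![0, 1; 1, -1], ?_, ?_⟩ <;>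
      ext i j <;> fin_cases i <;> fin_cases j <;> norm_num [mul_apply, Fin.sum_univ_two]
  · refine isUnit_iff_exists.2 ⟨!![0, -1; -1, -1], ?_, ?_⟩ <;>
      ext i j <;> fin_cases i <;> fin_cases j <;> norm_num [mul_apply, Fin.sum_univ_two]

theorem IsTwinGood.fin_two_of_pivot (hR : IsAbelianRegular R) {a b c d : R}
    (hunit : ∀ v, IsUnit v → IsTwinGood !![v, b; c, d]) (hzero : IsTwinGood !![0, b; c, d]) :
    IsTwinGood !![a, b; c, d] := by
  obtain ⟨x, hx⟩ := hR.regular a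
  obtain ⟨e, he, hc, hea, hu⟩ :=
    exists_isIdempotentElem_mul_eq_self_isUnit_add_one_sub hR.abelian hx
  refine IsTwinGood.of_isIdempotentElem (he.map (scalar (Fin 2))) (scalar_commute e hc)
    ?_ ?_ (hunit _ hu) hzero
  · rw [scalar_apply, ← smul_eq_diagonal_mul, ← smul_eq_diagonal_mul]
    simp [mul_add, he.mul_one_sub_self, hea]
  · rw [← map_one (scalar (Fin 2)), ← map_sub, scalar_apply, ← smul_eq_diagonal_mul,
      ← smul_eq_diagonal_mul]
    simp [sub_mul, hea]

theorem isTwinGood_fin_two_one_diag (hR : IsAbelianRegular R) (δ : R) :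
    IsTwinGood !![1, 0; 0, δ] := by
  have hσ := isUnit_fin_two_swap (R := R)
  have h : IsTwinGood !![δ, 0; 0, 1] := by
    refine IsTwinGood.fin_two_of_pivot hR (fun w hw => ?_) ?_
    · simpa using isTwinGood_one_fin_two.mul_mul (isUnit_fin_two_of_lower hw isUnit_one 0)
        isUnit_one
    · convert isTwinGood_fin_two_one_zero.mul_mul hσ hσ using 1
      simp
  convert h.mul_mul hσ hσ using 1
  simp

theorem isTwinGood_fin_two_of_isUnit (hR : IsAbelianRegular R) {v b c d : R} (hv : IsUnit v) :
    IsTwinGood !![v, b; c, d] := by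
  obtain ⟨v, rfl⟩ := hv
  refine .of_mul_mul (isUnit_fin_two_of_lower v⁻¹.isUnit isUnit_one (-(c * ↑v⁻¹)))
    (isUnit_fin_two_of_upper isUnit_one isUnit_one (-(↑v⁻¹ * b))) ?_
  convert isTwinGood_fin_two_one_diag hR (d - c * ↑v⁻¹ * b) using 1
  simp [sub_eq_neg_add]

theorem IsTwinGood.fin_two_of_corner_zero (hR : IsAbelianRegular R) {a b c d : R}
    (h : IsTwinGood !![0, b; c, d]) : IsTwinGood !![a, b; c, d] :=
  .fin_two_of_pivot hR (fun _ hv => isTwinGood_fin_two_of_isUnit hR hv) h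

theorem isTwinGood_fin_two (hR : IsAbelianRegular R) (A : Matrix (Fin 2) (Fin 2) R) :
    IsTwinGood A := by
  obtain ⟨a, b, c, d, rfl⟩ : ∃ a b c d : R, A = !![a, b; c, d] := ⟨_, _, _, _, eta_fin_two A⟩
  have hσ := isUnit_fin_two_swap (R := R)
  have h₄ : IsTwinGood !![c, 0; 0, 0] :=
    .fin_two_of_corner_zero hR (eta_fin_two (0 : Matrix (Fin 2) (Fin 2) R) ▸ .zero)
  have h₃ : IsTwinGood !![d, c; 0, 0] := by
    refine .fin_two_of_corner_zero hR ?_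
    convert h₄.mul_mul isUnit_one hσ using 1
    simp
  have h₂ : IsTwinGood !![b, 0; d, c] := by
    refine .fin_two_of_corner_zero hR ?_
    convert h₃.mul_mul hσ isUnit_one using 1
    simp
  refine .fin_two_of_corner_zero hR ?_
  convert h₂.mul_mul isUnit_one hσ using 1
  simp

end Matrix

/-- If `R` is an abelian von Neumann regular ring, then `M₂(R)` is twin-good. -/
theorem matrix_two_twinGood_of_abelianRegular (R : Type*) [Ring R]
    (hreg : ∀ a : R, ∃ x : R, a = a * x * a)
    (hab : ∀ e : R, e * e = e → ∀ y : R, e * y = y * e) :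
    ∀ A : Matrix (Fin 2) (Fin 2) R, ∃ U : Matrix (Fin 2) (Fin 2) R,
      IsUnit U ∧ IsUnit (A + U) ∧ IsUnit (A - U) :=
  isTwinGood_fin_two ⟨hreg, hab⟩
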